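/- Fix an unsatisfiable CNF formula F with n variables and integers w, s ≥ 1 with 2^n ≥ s ≥ 6nw, with blocks, t, 𝓗, ∂ and conditions as defined. If p = (g,h) is a condition with |Dom(g)| ≤ w and u ∈ [s], then there exists a condition p' = (g',h') that extends p (i.e. h ⊆ h') such that Dom(g') = Dom(g) ∪ {u}. -/

import Mathlib

/-! ## Clauses, CNFs and Resolution -/

/-- A clause over variables of type `α`: a finite set of literals `(x, b)`,
where `(x, true)` is the positive literal `X` and `(x, false)` is `¬X`. -/
abbrev Clause (α : Type) := Finset (α × Bool)

/-- A clause is non-tautological if it contains no variable together with its negation. -/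
def Clause.Nontaut {α : Type} (C : Clause α) : Prop :=
  ∀ x : α, ¬((x, true) ∈ C ∧ (x, false) ∈ C)

/-- A Resolution refutation of the set of clauses `F`: a nonempty sequence of
non-tautological clauses, each of which is a weakening (i.e. a superset) of a clause
of `F`, or a weakening of a resolvent `(D_v ∖ {X}) ∪ (D_w ∖ {¬X})` of two earlier
clauses `D_v, D_w` with `X ∈ D_v` and `¬X ∈ D_w`; the last clause is empty.
The length of the refutation is the length of the list. -/
def IsResRefutation {α : Type} [DecidableEq α] (F : Set (Clause α)) (P : List (Clause α)) : Prop :=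
  P ≠ [] ∧
  (∀ u : Fin P.length,
      Clause.Nontaut (P.get u) ∧
      ((∃ C ∈ F, C ⊆ P.get u) ∨
        ∃ v w : Fin P.length, (v : ℕ) < (u : ℕ) ∧ (w : ℕ) < (u : ℕ) ∧ ∃ x : α,
          (x, true) ∈ P.get v ∧ (x, false) ∈ P.get w ∧
          ((P.get v).erase (x, true) ∪ (P.get w).erase (x, false)) ⊆ P.get u)) ∧
  P.getLast? = some (∅ : Clause α)

/-- Satisfiability of a set of clauses. -/
def CnfSat {α : Type} (S : Set (Clause α)) : Prop :=
  ∃ a : α → Bool, ∀ C ∈ S, ∃ l ∈ C, a l.1 = l.2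

/-- The size of a CNF: the sum of the sizes (numbers of literals) of its clauses. -/
noncomputable def cnfSize {α : Type} (S : Set (Clause α)) : ℕ :=
  ∑ᶠ C ∈ S, Finset.card C

/-! ## Restrictions (partial assignments) -/

/-- The restriction (partial assignment) `ρ` satisfies the clause `C` (i.e. `C↾ρ = 1`). -/
def Clause.SatByR {α : Type} (ρ : α → Option Bool) (C : Clause α) : Prop :=
  ∃ l ∈ C, ρ l.1 = some l.2

/-- The restriction `ρ` falsifies the clause `C` (i.e. `C↾ρ = 0`). -/
def Clause.FalsByR {α : Type} (ρ : α → Option Bool) (C : Clause α) : Prop :=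
  ∀ l ∈ C, ρ l.1 = some (!l.2)

/-- The clause `C↾ρ` (relevant when `C` is neither satisfied nor falsified):
remove from `C` all falsified literals. -/
def Clause.restrictBy {α : Type} [DecidableEq α] (ρ : α → Option Bool) (C : Clause α) :
    Clause α :=
  C.filter (fun l => ρ l.1 ≠ some (!l.2))

/-- `F↾ρ` for a set of clauses `F`: it contains `C↾ρ` for those `C ∈ F` neither satisfied
nor falsified by `ρ`, together with the empty clause if some `C ∈ F` is falsified by `ρ`. -/
def cnfRestrict {α : Type} [DecidableEq α] (ρ : α → Option Bool) (S : Set (Clause α)) :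
    Set (Clause α) :=
  { E | ∃ C ∈ S, ¬Clause.SatByR ρ C ∧ ¬Clause.FalsByR ρ C ∧ E = Clause.restrictBy ρ C } ∪
  { E | E = (∅ : Clause α) ∧ ∃ C ∈ S, Clause.FalsByR ρ C }

open scoped Classical in
/-- `Π↾ρ` for a sequence of clauses: remove the satisfied clauses (the `1`s) and replace
the falsified ones (the `0`s) by the empty clause. -/
noncomputable def seqRestrict {α : Type} [DecidableEq α] (ρ : α → Option Bool)
    (P : List (Clause α)) : List (Clause α) :=
  (P.filter (fun C => decide (¬Clause.SatByR ρ C))).map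
    (fun C => if Clause.FalsByR ρ C then (∅ : Clause α) else Clause.restrictBy ρ C)

/-- The partial assignment `σ` extends the partial assignment `ρ`. -/
def optExtends {α : Type} (ρ σ : α → Option Bool) : Prop :=
  ∀ x b, ρ x = some b → σ x = some b

/-! ## CNFs with an explicit enumeration of clauses -/

/-- A CNF formula with variables `X_1, …, X_n` (indices in `Finset.Icc 1 n`) given with an
explicit enumeration `Cl 1, …, Cl m` of its clauses. -/
structure CNFFam where
  n : ℕ
  m : ℕ
  Cl : ℕ → Clause ℕ

namespace CNFFam

/-- Well-formedness: the clauses `C_1, …, C_m` are non-tautological, pairwise distinct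
(they enumerate a set of clauses), and use only the variables `X_1, …, X_n`. -/
def WF (F : CNFFam) : Prop :=
  (∀ j ∈ Finset.Icc 1 F.m, Clause.Nontaut (F.Cl j) ∧ ∀ l ∈ F.Cl j, l.1 ∈ Finset.Icc 1 F.n) ∧
  (∀ j ∈ Finset.Icc 1 F.m, ∀ j' ∈ Finset.Icc 1 F.m, F.Cl j = F.Cl j' → j = j')

/-- The underlying set of clauses. -/
def clauseSet (F : CNFFam) : Set (Clause ℕ) :=
  { C | ∃ j ∈ Finset.Icc 1 F.m, C = F.Cl j }

/-- `F` is satisfiable. -/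
def Sat (F : CNFFam) : Prop := CnfSat F.clauseSet

/-- `F` is a 3-CNF: all clauses have size at most 3. -/
def Is3CNF (F : CNFFam) : Prop := ∀ j ∈ Finset.Icc 1 F.m, (F.Cl j).card ≤ 3

end CNFFam

/-! ## The variables of the formulas REF and RREF -/

/-- The propositional variables of `REF(F,s)` and `RREF(F,s)`. -/
inductive RefVar : Type where
  | D (u i : ℕ) (b : Bool)
  | V (u i : ℕ)
  | I (u j : ℕ)
  | L (u v : ℕ)
  | R (u v : ℕ)
  | P (u : ℕ)
deriving DecidableEq

abbrev VClause := Clause RefVar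

/-- The index mentioned by a variable: `D[u,i,b], V[u,i], I[u,j], L[u,v], R[u,v], P[u]`
all mention the index `u`. -/
def RefVar.idx : RefVar → ℕ
  | .D u _ _ => u
  | .V u _ => u
  | .I u _ => u
  | .L u _ => u
  | .R u _ => u
  | .P u => u

/-- The positive literal on a variable. -/
def pLit (x : RefVar) : RefVar × Bool := (x, true)

/-- The negative literal on a variable. -/
def nLit (x : RefVar) : RefVar × Bool := (x, false)

/-- The index-width of a clause: the number of indices mentioned by its variables. -/
def idxWidth (C : VClause) : ℕ := (C.image (fun l => RefVar.idx l.1)).card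

/-! ## The clauses of REF and RREF -/

namespace Ref

/-- (A1) `V[u,0] ∨ V[u,1] ∨ ⋯ ∨ V[u,n]`. -/
def A1 (F : CNFFam) (A : Finset ℕ) : Set VClause :=
  { C | ∃ u ∈ A, C = (Finset.range (F.n + 1)).image (fun i => pLit (.V u i)) }

/-- (A2) `I[u,0] ∨ I[u,1] ∨ ⋯ ∨ I[u,m]`. -/
def A2 (F : CNFFam) (A : Finset ℕ) : Set VClause :=
  { C | ∃ u ∈ A, C = (Finset.range (F.m + 1)).image (fun j => pLit (.I u j)) }

/-- (A3) `L[u,0] ∨ L[u,1] ∨ ⋯ ∨ L[u,s]` (disjunction over the index set and 0). -/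
def A3 (A : Finset ℕ) : Set VClause :=
  { C | ∃ u ∈ A, C = (insert 0 A).image (fun v => pLit (.L u v)) }

/-- (A4) `R[u,0] ∨ R[u,1] ∨ ⋯ ∨ R[u,s]`. -/
def A4 (A : Finset ℕ) : Set VClause :=
  { C | ∃ u ∈ A, C = (insert 0 A).image (fun v => pLit (.R u v)) }

/-- (A5) `¬V[u,i] ∨ ¬V[u,i']`, `i ≠ i'`. -/
def A5 (F : CNFFam) (A : Finset ℕ) : Set VClause :=
  { C | ∃ u ∈ A, ∃ i ∈ Finset.range (F.n + 1), ∃ i' ∈ Finset.range (F.n + 1),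
      i ≠ i' ∧ C = {nLit (.V u i), nLit (.V u i')} }

/-- (A6) `¬I[u,j] ∨ ¬I[u,j']`, `j ≠ j'`. -/
def A6 (F : CNFFam) (A : Finset ℕ) : Set VClause :=
  { C | ∃ u ∈ A, ∃ j ∈ Finset.range (F.m + 1), ∃ j' ∈ Finset.range (F.m + 1),
      j ≠ j' ∧ C = {nLit (.I u j), nLit (.I u j')} }

/-- (A7) `¬L[u,v] ∨ ¬L[u,v']`, `v ≠ v'`. -/
def A7 (A : Finset ℕ) : Set VClause :=
  { C | ∃ u ∈ A, ∃ v ∈ insert 0 A, ∃ v' ∈ insert 0 A,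
      v ≠ v' ∧ C = {nLit (.L u v), nLit (.L u v')} }

/-- (A8) `¬R[u,v] ∨ ¬R[u,v']`, `v ≠ v'`. -/
def A8 (A : Finset ℕ) : Set VClause :=
  { C | ∃ u ∈ A, ∃ v ∈ insert 0 A, ∃ v' ∈ insert 0 A,
      v ≠ v' ∧ C = {nLit (.R u v), nLit (.R u v')} }

/-- (A9) `¬I[u,0] ∨ ¬V[u,0]`. -/
def A9 (A : Finset ℕ) : Set VClause := { C | ∃ u ∈ A, C = {nLit (.I u 0), nLit (.V u 0)} }

/-- (A10) `I[u,0] ∨ V[u,0]`. -/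
def A10 (A : Finset ℕ) : Set VClause := { C | ∃ u ∈ A, C = {pLit (.I u 0), pLit (.V u 0)} }

/-- (A11) `¬I[u,0] ∨ ¬L[u,0]`. -/
def A11 (A : Finset ℕ) : Set VClause := { C | ∃ u ∈ A, C = {nLit (.I u 0), nLit (.L u 0)} }

/-- (A12) `¬I[u,0] ∨ ¬R[u,0]`. -/
def A12 (A : Finset ℕ) : Set VClause := { C | ∃ u ∈ A, C = {nLit (.I u 0), nLit (.R u 0)} }

/-- (A13) `¬L[u,v]` for `u ≤ v`. -/
def A13 (A : Finset ℕ) : Set VClause :=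
  { C | ∃ u ∈ A, ∃ v ∈ A, u ≤ v ∧ C = {nLit (.L u v)} }

/-- (A14) `¬R[u,v]` for `u ≤ v`. -/
def A14 (A : Finset ℕ) : Set VClause :=
  { C | ∃ u ∈ A, ∃ v ∈ A, u ≤ v ∧ C = {nLit (.R u v)} }

/-- (A15) `¬L[u,v] ∨ ¬V[u,i] ∨ D[v,i,0]`. -/
def A15 (F : CNFFam) (A : Finset ℕ) : Set VClause :=
  { C | ∃ u ∈ A, ∃ v ∈ A, ∃ i ∈ Finset.Icc 1 F.n,
      C = {nLit (.L u v), nLit (.V u i), pLit (.D v i false)} }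

/-- (A16) `¬R[u,v] ∨ ¬V[u,i] ∨ D[v,i,1]`. -/
def A16 (F : CNFFam) (A : Finset ℕ) : Set VClause :=
  { C | ∃ u ∈ A, ∃ v ∈ A, ∃ i ∈ Finset.Icc 1 F.n,
      C = {nLit (.R u v), nLit (.V u i), pLit (.D v i true)} }

/-- (A17) `¬L[u,v] ∨ ¬V[u,i] ∨ ¬D[v,i',b] ∨ D[u,i',b]`, `i' ≠ i`. -/
def A17 (F : CNFFam) (A : Finset ℕ) : Set VClause :=
  { C | ∃ u ∈ A, ∃ v ∈ A, ∃ i ∈ Finset.Icc 1 F.n, ∃ i' ∈ Finset.Icc 1 F.n, ∃ b : Bool,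
      i' ≠ i ∧ C = {nLit (.L u v), nLit (.V u i), nLit (.D v i' b), pLit (.D u i' b)} }

/-- (A18) `¬R[u,v] ∨ ¬V[u,i] ∨ ¬D[v,i',b] ∨ D[u,i',b]`, `i' ≠ i`. -/
def A18 (F : CNFFam) (A : Finset ℕ) : Set VClause :=
  { C | ∃ u ∈ A, ∃ v ∈ A, ∃ i ∈ Finset.Icc 1 F.n, ∃ i' ∈ Finset.Icc 1 F.n, ∃ b : Bool,
      i' ≠ i ∧ C = {nLit (.R u v), nLit (.V u i), nLit (.D v i' b), pLit (.D u i' b)} }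

/-- (A19) `¬I[u,j] ∨ D[u,i,b]` for `X_i^{(b)} ∈ C_j`. -/
def A19 (F : CNFFam) (A : Finset ℕ) : Set VClause :=
  { C | ∃ u ∈ A, ∃ j ∈ Finset.Icc 1 F.m, ∃ i : ℕ, ∃ b : Bool,
      (i, b) ∈ F.Cl j ∧ C = {nLit (.I u j), pLit (.D u i b)} }

/-- (A20) `¬D[u,i,0] ∨ ¬D[u,i,1]`. -/
def A20 (F : CNFFam) (A : Finset ℕ) : Set VClause :=
  { C | ∃ u ∈ A, ∃ i ∈ Finset.Icc 1 F.n, C = {nLit (.D u i false), nLit (.D u i true)} }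

/-- (A21) `¬D[s,i,b]` (for the last index `t`). -/
def A21 (F : CNFFam) (t : ℕ) : Set VClause :=
  { C | ∃ i ∈ Finset.Icc 1 F.n, ∃ b : Bool, C = {nLit (.D t i b)} }

/-- (A22) `¬P[u] ∨ ¬L[u,v] ∨ P[v]`. -/
def A22 (A : Finset ℕ) : Set VClause :=
  { C | ∃ u ∈ A, ∃ v ∈ A, C = {nLit (.P u), nLit (.L u v), pLit (.P v)} }

/-- (A23) `¬P[u] ∨ ¬R[u,v] ∨ P[v]`. -/
def A23 (A : Finset ℕ) : Set VClause :=
  { C | ∃ u ∈ A, ∃ v ∈ A, C = {nLit (.P u), nLit (.R u v), pLit (.P v)} }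

/-- (A24) `P[s]` (for the last index `t`). -/
def A24 (t : ℕ) : Set VClause := { C | C = {pLit (.P t)} }

end Ref

/-- The formula `REF(F, A)` with index set `A` (in place of `[s]`) and last index `t`
(in the role of `s`): the clauses (A1)–(A21). -/
def REFA (F : CNFFam) (A : Finset ℕ) (t : ℕ) : Set VClause :=
  Ref.A1 F A ∪ Ref.A2 F A ∪ Ref.A3 A ∪ Ref.A4 A ∪ Ref.A5 F A ∪ Ref.A6 F A ∪
    Ref.A7 A ∪ Ref.A8 A ∪ Ref.A9 A ∪ Ref.A10 A ∪ Ref.A11 A ∪ Ref.A12 A ∪ Ref.A13 A ∪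
    Ref.A14 A ∪ Ref.A15 F A ∪ Ref.A16 F A ∪ Ref.A17 F A ∪ Ref.A18 F A ∪ Ref.A19 F A ∪
    Ref.A20 F A ∪ Ref.A21 F t

/-- The formula `REF(F, s)`. -/
def REF (F : CNFFam) (s : ℕ) : Set VClause := REFA F (Finset.Icc 1 s) s

/-- Relativization of a clause: add the literal `¬P[u]` for every index `u` mentioned
by a variable occurring in the clause. -/
def relCl (C : VClause) : VClause :=
  C ∪ (C.image (fun l => RefVar.idx l.1)).image (fun u => nLit (.P u))

/-- The formula `RREF(F, s)`: the relativized clauses of `REF(F,s)` together with the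
clauses (A22), (A23) and (A24). -/
def RREF (F : CNFFam) (s : ℕ) : Set VClause :=
  (relCl '' REF F s) ∪ Ref.A22 (Finset.Icc 1 s) ∪ Ref.A23 (Finset.Icc 1 s) ∪ Ref.A24 s

/-- `REF(F,s)` with the clauses of types (A7) and (A8) deleted. -/
def REFnoLR (F : CNFFam) (s : ℕ) : Set VClause :=
  Ref.A1 F (Finset.Icc 1 s) ∪ Ref.A2 F (Finset.Icc 1 s) ∪ Ref.A3 (Finset.Icc 1 s) ∪
    Ref.A4 (Finset.Icc 1 s) ∪ Ref.A5 F (Finset.Icc 1 s) ∪ Ref.A6 F (Finset.Icc 1 s) ∪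
    Ref.A9 (Finset.Icc 1 s) ∪ Ref.A10 (Finset.Icc 1 s) ∪ Ref.A11 (Finset.Icc 1 s) ∪
    Ref.A12 (Finset.Icc 1 s) ∪ Ref.A13 (Finset.Icc 1 s) ∪ Ref.A14 (Finset.Icc 1 s) ∪
    Ref.A15 F (Finset.Icc 1 s) ∪ Ref.A16 F (Finset.Icc 1 s) ∪ Ref.A17 F (Finset.Icc 1 s) ∪
    Ref.A18 F (Finset.Icc 1 s) ∪ Ref.A19 F (Finset.Icc 1 s) ∪ Ref.A20 F (Finset.Icc 1 s) ∪
    Ref.A21 F s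

/-- `RREF'(F,s)`: obtained from `RREF(F,s)` by deleting the (relativized) clauses of
types (A7) and (A8). -/
def RREF' (F : CNFFam) (s : ℕ) : Set VClause :=
  (relCl '' REFnoLR F s) ∪ Ref.A22 (Finset.Icc 1 s) ∪ Ref.A23 (Finset.Icc 1 s) ∪ Ref.A24 s

/-! ## Refutations as structures -/

/-- A structure `(D, V, I, L, R)` of the type of a length-`s` refutation. -/
structure RefStruct where
  Dr : ℕ → ℕ → Bool → Bool
  Vf : ℕ → ℕ
  If' : ℕ → ℕ
  Lf : ℕ → ℕ
  Rf : ℕ → ℕ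

namespace RefStruct

/-- The typing conditions: `D ⊆ [s]×[n]×B`, `V : [s] → [n]∪{0}`, `I : [s] → [m]∪{0}`,
`L, R : [s] → [s]∪{0}`. -/
def WFOn (M : RefStruct) (s n m : ℕ) : Prop :=
  (∀ u i b, M.Dr u i b = true → u ∈ Finset.Icc 1 s ∧ i ∈ Finset.Icc 1 n) ∧
  (∀ u ∈ Finset.Icc 1 s, M.Vf u ≤ n) ∧
  (∀ u ∈ Finset.Icc 1 s, M.If' u ≤ m) ∧
  (∀ u ∈ Finset.Icc 1 s, M.Lf u ≤ s) ∧
  (∀ u ∈ Finset.Icc 1 s, M.Rf u ≤ s)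

/-- (R1)–(R8): the structure is a refutation of `F` of length `s`. -/
def IsRefutationOf (M : RefStruct) (F : CNFFam) (s : ℕ) : Prop :=
  ∀ u ∈ Finset.Icc 1 s,
    ((M.Vf u = 0 ∨ M.If' u = 0) ∧ ¬(M.Vf u = 0 ∧ M.If' u = 0)) ∧
    (M.If' u = 0 → M.Lf u ≠ 0 ∧ M.Rf u ≠ 0) ∧
    (M.Lf u < u ∧ M.Rf u < u) ∧
    (∀ i ∈ Finset.Icc 1 F.n, ∀ v ∈ Finset.Icc 1 s,
      (M.Vf u = i → M.Lf u = v → M.Dr v i false = true) ∧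
      (M.Vf u = i → M.Rf u = v → M.Dr v i true = true) ∧
      (∀ i' ∈ Finset.Icc 1 F.n, ∀ b : Bool,
        M.Vf u = i → i ≠ i' → M.Lf u = v → M.Dr v i' b = true → M.Dr u i' b = true) ∧
      (∀ i' ∈ Finset.Icc 1 F.n, ∀ b : Bool,
        M.Vf u = i → i ≠ i' → M.Rf u = v → M.Dr v i' b = true → M.Dr u i' b = true)) ∧
    (∀ j ∈ Finset.Icc 1 F.m, ∀ i : ℕ, ∀ b : Bool,
      M.If' u = j → (i, b) ∈ F.Cl j → M.Dr u i b = true) ∧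
    (∀ i ∈ Finset.Icc 1 F.n, ¬(M.Dr u i false = true ∧ M.Dr u i true = true)) ∧
    (∀ i ∈ Finset.Icc 1 F.n, ∀ b : Bool, M.Dr s i b = false)

/-- The truth assignment associated to a structure. -/
def assign (M : RefStruct) : RefVar → Bool
  | .D u i b => M.Dr u i b
  | .V u i => M.Vf u == i
  | .I u j => M.If' u == j
  | .L u v => M.Lf u == v
  | .R u v => M.Rf u == v
  | .P _ => true

end RefStruct

/-! ## The full-tree refutation -/

/-- The level `h` of the node numbered `u` in the full binary tree with `n+1` levels. -/
def levelOf (n u : ℕ) : ℕ := Nat.log 2 (2 ^ (n + 1) - u)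

/-- The value (position within its level, `a₁` most significant) of the node numbered `u`. -/
def valOf (n u : ℕ) : ℕ := u - (2 ^ (n + 1) + 1 - 2 ^ (levelOf n u + 1))

/-- The `i`-th bit `a_i` of the binary string `a` labelling the node numbered `u`. -/
def digitOf (n u i : ℕ) : Bool := (valOf n u).testBit (levelOf n u - i)

/-- The clause `C_a = X_1^{(a_1)} ∨ ⋯ ∨ X_n^{(a_n)}` labelling the leaf numbered `u`. -/
def leafClause (F : CNFFam) (u : ℕ) : Clause ℕ :=
  (Finset.Icc 1 F.n).image (fun i => (i, digitOf F.n u i))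

/-- The full-tree Resolution refutation `(D*, V*, I*, L*, R*)` of `F`,
of length `s* = 2^{n+1} - 1`. -/
noncomputable def fullTree (F : CNFFam) : RefStruct where
  Dr := fun u i b =>
    decide (1 ≤ u ∧ u ≤ 2 ^ (F.n + 1) - 1 ∧ 1 ≤ i ∧ i ≤ levelOf F.n u) &&
      (digitOf F.n u i == b)
  Vf := fun u =>
    if 1 ≤ u ∧ u ≤ 2 ^ (F.n + 1) - 1 ∧ levelOf F.n u < F.n then levelOf F.n u + 1 else 0
  If' := fun u =>
    if 1 ≤ u ∧ u ≤ 2 ^ (F.n + 1) - 1 ∧ levelOf F.n u = F.n then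
      sInf { j : ℕ | j ∈ Finset.Icc 1 F.m ∧ F.Cl j ⊆ leafClause F u }
    else 0
  Lf := fun u =>
    if 1 ≤ u ∧ u ≤ 2 ^ (F.n + 1) - 1 ∧ levelOf F.n u < F.n then
      2 ^ (F.n + 1) + 1 + 2 * valOf F.n u - 2 ^ (levelOf F.n u + 2)
    else 0
  Rf := fun u =>
    if 1 ≤ u ∧ u ≤ 2 ^ (F.n + 1) - 1 ∧ levelOf F.n u < F.n then
      2 ^ (F.n + 1) + 2 + 2 * valOf F.n u - 2 ^ (levelOf F.n u + 2)
    else 0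

/-! ## Blocks, the family 𝓗, and conditions -/

/-- The integer `k` with `2^k < 3w ≤ 2^{k+1}`. -/
def kOf (w : ℕ) : ℕ := Nat.log 2 (3 * w - 1)

/-- The block `B*_i` of `[s*]`, `s* = 2^{n+1} - 1`. -/
def Bstar (n w i : ℕ) : Finset ℕ :=
  let s' := 2 ^ (n + 1) - 1
  let k := kOf w
  if i = 0 then Finset.Icc (s' - 2 ^ (k + 1) + 2) s'
  else Finset.Icc (s' + 2 - 2 ^ (k + 1 + i)) (s' - 2 ^ (k + i) + 1)

/-- The block `B_i` of `[s]`. -/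
def Bblk (n s w i : ℕ) : Finset ℕ :=
  let k := kOf w
  if i = 0 then Finset.Icc (s - 2 ^ (k + 1) + 2) s
  else if i = n - k then Finset.Icc 1 (s - 2 ^ (k + 1) * (n - k) + 1)
  else Finset.Icc (s - 2 ^ (k + 1) * (i + 1) + 2) (s - 2 ^ (k + 1) * i + 1)

/-- The bijection `t : B_0 → B*_0`, `t(u) = u - s + s*`. -/
def tmap (n s u : ℕ) : ℕ := u + (2 ^ (n + 1) - 1 - s)

/-- `h` (a set of pairs) is a partial function. -/
def pfun (h : Finset (ℕ × ℕ)) : Prop :=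
  ∀ p ∈ h, ∀ q ∈ h, p.1 = q.1 → p.2 = q.2

/-- The domain of a partial function given as a set of pairs. -/
def pdom (h : Finset (ℕ × ℕ)) : Finset ℕ := h.image Prod.fst

/-- The image of a partial function given as a set of pairs. -/
def pimg (h : Finset (ℕ × ℕ)) : Finset ℕ := h.image Prod.snd

/-- Membership in the family `𝓗`: injective partial functions
`h : [s]∪{0} → [s*]∪{0}` satisfying (H1)–(H4). -/
def memH (n s w : ℕ) (h : Finset (ℕ × ℕ)) : Prop :=
  pfun h ∧
  (∀ p ∈ h, p.1 ∈ insert 0 (Finset.Icc 1 s) ∧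
    p.2 ∈ insert 0 (Finset.Icc 1 (2 ^ (n + 1) - 1))) ∧
  (∀ p ∈ h, ∀ q ∈ h, p.2 = q.2 → p.1 = q.1) ∧
  ((0, 0) ∈ h) ∧
  (∀ p ∈ h, p.1 ∈ Bblk n s w 0 → p.2 = tmap n s p.1) ∧
  (∀ p ∈ h, ∀ i ∈ Finset.Icc 1 (n - kOf w), p.1 ∈ Bblk n s w i → p.2 ∈ Bstar n w i)

/-- `∂I = {L*(u) | u ∈ I∖{0}} ∪ {R*(u) | u ∈ I∖{0}}`. -/
noncomputable def bnd (F : CNFFam) (I : Finset ℕ) : Finset ℕ :=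
  (I.erase 0).image (fullTree F).Lf ∪ (I.erase 0).image (fullTree F).Rf

/-- A condition: a pair `p = (g, h)` of members of `𝓗` with (C1) `g ⊆ h` and
(C2) `Img(h) = Img(g) ∪ ∂Img(g)`. -/
def IsCond (F : CNFFam) (s w : ℕ) (g h : Finset (ℕ × ℕ)) : Prop :=
  memH F.n s w g ∧ memH F.n s w h ∧ g ⊆ h ∧ pimg h = pimg g ∪ bnd F (pimg g)

/-- Application of a partial function given as a set of pairs. -/
noncomputable def papp (g : Finset (ℕ × ℕ)) (u : ℕ) : ℕ := sInf { v : ℕ | (u, v) ∈ g }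

/-- Inverse application of an (injective) partial function given as a set of pairs. -/
noncomputable def pinv (h : Finset (ℕ × ℕ)) (y : ℕ) : ℕ := sInf { u : ℕ | (u, y) ∈ h }

/-- The partial assignment `α(p)` determined by a condition `p = (g, h)`: it is defined
precisely on the variables (of `REF(F,s)`) mentioning some `u ∈ Dom(g) ∖ {0}`, where it is
read off from the full-tree refutation through `g` (and `h` for the `L`- and `R`-variables). -/
noncomputable def alphaP (F : CNFFam) (g h : Finset (ℕ × ℕ)) : RefVar → Option Bool :=
  fun x =>
    if RefVar.idx x ∈ (pdom g).erase 0 then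
      match x with
      | RefVar.D u i b => some ((fullTree F).assign (RefVar.D (papp g u) i b))
      | RefVar.V u i => some ((fullTree F).assign (RefVar.V (papp g u) i))
      | RefVar.I u j => some ((fullTree F).assign (RefVar.I (papp g u) j))
      | RefVar.L u v => some (decide (v = pinv h ((fullTree F).Lf (papp g u))))
      | RefVar.R u v => some (decide (v = pinv h ((fullTree F).Rf (papp g u))))
      | RefVar.P _ => none
    else none

open scoped Classical in
/-- The restriction `p↾I` of a condition `p = (g,h)`: `g'` is the restriction of `g` to
`I ∪ {0}` and `h'` is the restriction of `h` with image `Img(g') ∪ ∂Img(g')`. -/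
noncomputable def condRestrict (F : CNFFam) (g h : Finset (ℕ × ℕ)) (I : Finset ℕ) :
    Finset (ℕ × ℕ) × Finset (ℕ × ℕ) :=
  let g' := g.filter (fun p => p.1 ∈ insert 0 I)
  let h' := h.filter (fun p => p.2 ∈ pimg g' ∪ bnd F (pimg g'))
  (g', h')


section Claim3Aux

lemma c3_mem_pdom {h : Finset (ℕ × ℕ)} {u : ℕ} : u ∈ pdom h ↔ ∃ v, (u, v) ∈ h := by
  unfold pdom
  simp only [Finset.mem_image, Prod.exists]
  constructor
  · rintro ⟨a, b, hab, rfl⟩; exact ⟨b, hab⟩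
  · rintro ⟨v, hv⟩; exact ⟨u, v, hv, rfl⟩

lemma c3_mem_pimg {h : Finset (ℕ × ℕ)} {v : ℕ} : v ∈ pimg h ↔ ∃ u, (u, v) ∈ h := by
  unfold pimg
  simp only [Finset.mem_image, Prod.exists]
  constructor
  · rintro ⟨a, b, hab, rfl⟩; exact ⟨a, hab⟩
  · rintro ⟨u, hv⟩; exact ⟨u, v, hv, rfl⟩

lemma c3_papp_mem {h : Finset (ℕ × ℕ)} {u : ℕ} (hu : u ∈ pdom h) : (u, papp h u) ∈ h := by
  obtain ⟨v, hv⟩ := c3_mem_pdom.1 hu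
  have : { v : ℕ | (u, v) ∈ h }.Nonempty := ⟨v, hv⟩
  exact Nat.sInf_mem this

lemma c3_pimg_insert (p : ℕ × ℕ) (h : Finset (ℕ × ℕ)) :
    pimg (insert p h) = insert p.2 (pimg h) := by simp [pimg]

lemma c3_pdom_insert (p : ℕ × ℕ) (h : Finset (ℕ × ℕ)) :
    pdom (insert p h) = insert p.1 (pdom h) := by simp [pdom]

lemma c3_zero_mem_pimg {n s w : ℕ} {h : Finset (ℕ × ℕ)} (hh : memH n s w h) :
    (0 : ℕ) ∈ pimg h := c3_mem_pimg.2 ⟨0, hh.2.2.2.1⟩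

lemma c3_zero_mem_pdom {n s w : ℕ} {h : Finset (ℕ × ℕ)} (hh : memH n s w h) :
    (0 : ℕ) ∈ pdom h := c3_mem_pdom.2 ⟨0, hh.2.2.2.1⟩

lemma c3_memH_subset {n s w : ℕ} {g h : Finset (ℕ × ℕ)} (hgh : g ⊆ h)
    (hh : memH n s w h) (h0 : (0, 0) ∈ g) : memH n s w g := by
  obtain ⟨h1, h2, h3, _, h5, h6⟩ := hh
  exact ⟨fun p hp q hq => h1 p (hgh hp) q (hgh hq),
    fun p hp => h2 p (hgh hp),
    fun p hp q hq => h3 p (hgh hp) q (hgh hq), h0,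
    fun p hp => h5 p (hgh hp),
    fun p hp => h6 p (hgh hp)⟩

lemma c3_memH_insert {n s w : ℕ} {h : Finset (ℕ × ℕ)} (hh : memH n s w h)
    {u' z : ℕ}
    (hud : u' ∉ pdom h) (hzi : z ∉ pimg h)
    (hus : u' ∈ Finset.Icc 1 s) (hzs : z ∈ Finset.Icc 1 (2 ^ (n + 1) - 1))
    (hH3 : u' ∈ Bblk n s w 0 → z = tmap n s u')
    (hH4 : ∀ i ∈ Finset.Icc 1 (n - kOf w), u' ∈ Bblk n s w i → z ∈ Bstar n w i) :
    memH n s w (insert (u', z) h) := by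
  obtain ⟨h1, h2, h3, h4, h5, h6⟩ := hh
  refine ⟨?_, ?_, ?_, Finset.mem_insert_of_mem h4, ?_, ?_⟩
  · intro p hp q hq hpq
    rcases Finset.mem_insert.1 hp with rfl | hp <;>
      rcases Finset.mem_insert.1 hq with rfl | hq
    · rfl
    · exfalso; apply hud; rw [show u' = q.1 from hpq]
      exact c3_mem_pdom.2 ⟨q.2, by simpa using hq⟩
    · exfalso; apply hud; rw [← show p.1 = u' from hpq]
      exact c3_mem_pdom.2 ⟨p.2, by simpa using hp⟩
    · exact h1 p hp q hq hpq
  · intro p hp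
    rcases Finset.mem_insert.1 hp with rfl | hp
    · exact ⟨Finset.mem_insert_of_mem hus, Finset.mem_insert_of_mem hzs⟩
    · exact h2 p hp
  · intro p hp q hq hpq
    rcases Finset.mem_insert.1 hp with rfl | hp <;>
      rcases Finset.mem_insert.1 hq with rfl | hq
    · rfl
    · exfalso; apply hzi; rw [show z = q.2 from hpq]
      exact c3_mem_pimg.2 ⟨q.1, by simpa using hq⟩
    · exfalso; apply hzi; rw [← show p.2 = z from hpq]
      exact c3_mem_pimg.2 ⟨p.1, by simpa using hp⟩
    · exact h3 p hp q hq hpq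
  · intro p hp hp0
    rcases Finset.mem_insert.1 hp with rfl | hp
    · exact hH3 hp0
    · exact h5 p hp hp0
  · intro p hp i hi hpi
    rcases Finset.mem_insert.1 hp with rfl | hp
    · exact hH4 i hi hpi
    · exact h6 p hp i hi hpi

end Claim3Aux
section Claim3Arith

lemma c3_kOf_spec {w : ℕ} (hw : 1 ≤ w) :
    1 ≤ kOf w ∧ 2 ^ kOf w < 3 * w ∧ 3 * w ≤ 2 ^ (kOf w + 1) := by
  have h2 : 2 ≤ 3 * w - 1 := by omega
  have hlog1 : 0 < Nat.log 2 (3 * w - 1) := Nat.log_pos (by norm_num) h2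
  have hle : 2 ^ Nat.log 2 (3 * w - 1) ≤ 3 * w - 1 := Nat.pow_log_le_self 2 (by omega)
  have hlt : 3 * w - 1 < 2 ^ (Nat.log 2 (3 * w - 1) + 1) := by
    have := Nat.lt_pow_succ_log_self (by norm_num : 1 < 2) (3 * w - 1)
    simpa [Nat.succ_eq_add_one] using this
  unfold kOf
  omega

lemma c3_big {n s w : ℕ} (hn : 1 ≤ n) (hlow : 6 * n * w ≤ s)
    (hk1 : 1 ≤ kOf w) (hk2 : 2 ^ kOf w < 3 * w) :
    2 ^ (kOf w + 1) * (n - kOf w) + 3 * w ≤ s := by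
  have e1 : 2 ^ (kOf w + 1) = 2 * 2 ^ kOf w := by ring
  have h1 : 2 ^ (kOf w + 1) ≤ 6 * w := by omega
  have h2 : n - kOf w ≤ n - 1 := by omega
  have h3 : 2 ^ (kOf w + 1) * (n - kOf w) ≤ (6 * w) * (n - 1) :=
    Nat.mul_le_mul h1 h2
  obtain ⟨n', rfl⟩ : ∃ n', n = n' + 1 := ⟨n - 1, by omega⟩
  have h4 : (6 * w) * (n' + 1 - 1) = 6 * w * n' := by norm_num
  have h5 : 6 * (n' + 1) * w = 6 * w * n' + 6 * w := by ring
  omega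

lemma c3_level_spec {n y : ℕ} (h1 : 1 ≤ y) (h2 : y ≤ 2 ^ (n + 1) - 1) :
    2 ^ levelOf n y ≤ 2 ^ (n + 1) - y ∧ 2 ^ (n + 1) - y < 2 ^ (levelOf n y + 1) ∧
      levelOf n y ≤ n := by
  have hQ : 1 ≤ 2 ^ (n + 1) := Nat.one_le_two_pow
  have hx : 2 ^ (n + 1) - y ≠ 0 := by omega
  have a := Nat.pow_log_le_self 2 hx
  have b := Nat.lt_pow_succ_log_self (by norm_num : (1 : ℕ) < 2) (2 ^ (n + 1) - y)
  simp only [Nat.succ_eq_add_one] at b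
  have c : Nat.log 2 (2 ^ (n + 1) - y) < n + 1 := Nat.log_lt_of_lt_pow hx (by omega)
  unfold levelOf
  exact ⟨a, b, by omega⟩

lemma c3_level_eq {n z ℓ : ℕ} (h1 : 2 ^ ℓ ≤ 2 ^ (n + 1) - z) (h2 : 2 ^ (n + 1) - z < 2 ^ (ℓ + 1)) :
    levelOf n z = ℓ := Nat.log_eq_of_pow_le_of_lt_pow h1 h2

lemma c3_mem_Bstar0 {n w z : ℕ} (hk : kOf w < n) :
    z ∈ Bstar n w 0 ↔ 1 ≤ z ∧ z ≤ 2 ^ (n + 1) - 1 ∧ levelOf n z ≤ kOf w := by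
  have eQ : 2 ^ (n + 1) = 2 * 2 ^ n := by ring
  have e1 : 2 ^ (kOf w + 1) ≤ 2 ^ n := Nat.pow_le_pow_right (by norm_num) (by omega)
  have e2 : (1 : ℕ) ≤ 2 ^ (kOf w + 1) := Nat.one_le_two_pow
  have e2' : (1 : ℕ) ≤ 2 ^ n := Nat.one_le_two_pow
  unfold Bstar
  simp only [reduceIte, Finset.mem_Icc]
  constructor
  · rintro ⟨hz1, hz2⟩
    have hz0 : 1 ≤ z := by omega
    have hne : 2 ^ (n + 1) - z ≠ 0 := by omega
    have hQz : 2 ^ (n + 1) - z < 2 ^ (kOf w + 1) := by omega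
    have : levelOf n z < kOf w + 1 := Nat.log_lt_of_lt_pow hne hQz
    exact ⟨hz0, hz2, by omega⟩
  · rintro ⟨hz1, hz2, hz3⟩
    have hlow := (c3_level_spec hz1 hz2).2.1
    have : 2 ^ (levelOf n z + 1) ≤ 2 ^ (kOf w + 1) :=
      Nat.pow_le_pow_right (by norm_num) (by omega)
    omega

lemma c3_mem_BstarI {n w z i : ℕ} (hk : kOf w < n) (hi1 : 1 ≤ i) (hi2 : i ≤ n - kOf w) :
    z ∈ Bstar n w i ↔ 1 ≤ z ∧ z ≤ 2 ^ (n + 1) - 1 ∧ levelOf n z = kOf w + i := by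
  have eQ : 2 ^ (n + 1) = 2 * 2 ^ n := by ring
  have e1 : 2 ^ (kOf w + 1 + i) ≤ 2 ^ (n + 1) := Nat.pow_le_pow_right (by norm_num) (by omega)
  have e2 : (1 : ℕ) ≤ 2 ^ (kOf w + i) := Nat.one_le_two_pow
  have e3 : 2 ^ (kOf w + 1 + i) = 2 * 2 ^ (kOf w + i) := by ring
  have e4 : 2 ^ (kOf w + i + 1) = 2 * 2 ^ (kOf w + i) := by ring
  have e6 : 2 ^ (kOf w + i) ≤ 2 ^ n := Nat.pow_le_pow_right (by norm_num) (by omega)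
  unfold Bstar
  rw [if_neg (by omega : ¬ i = 0)]
  simp only [Finset.mem_Icc]
  constructor
  · rintro ⟨hz1, hz2⟩
    have hz0 : 1 ≤ z := by omega
    have hz2' : z ≤ 2 ^ (n + 1) - 1 := by omega
    exact ⟨hz0, hz2', c3_level_eq (by omega) (by omega)⟩
  · rintro ⟨hz1, hz2, hz3⟩
    have hspec := c3_level_spec hz1 hz2
    rw [hz3] at hspec
    omega

lemma c3_Bstar_disj0 {n w z i : ℕ} (hk : kOf w < n) (hi1 : 1 ≤ i) (hi2 : i ≤ n - kOf w)
    (h0 : z ∈ Bstar n w 0) (hi : z ∈ Bstar n w i) : False := by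
  have a := (c3_mem_Bstar0 hk).1 h0
  have b := (c3_mem_BstarI hk hi1 hi2).1 hi
  omega

lemma c3_Bstar_pos {n w z j : ℕ} (hk : kOf w < n) (hj : j ≤ n - kOf w)
    (hz : z ∈ Bstar n w j) : 1 ≤ z ∧ z ≤ 2 ^ (n + 1) - 1 := by
  by_cases h0 : j = 0
  · subst h0; have := (c3_mem_Bstar0 hk).1 hz; exact ⟨this.1, this.2.1⟩
  · have := (c3_mem_BstarI hk (by omega) hj).1 hz; exact ⟨this.1, this.2.1⟩

lemma c3_Bstar_card {n w j : ℕ} (hw : 1 ≤ w) (hk : kOf w < n)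
    (hj1 : 1 ≤ j) (hj2 : j ≤ n - kOf w) : 3 * w ≤ (Bstar n w j).card := by
  have h3w : 3 * w ≤ 2 ^ (kOf w + 1) := (c3_kOf_spec hw).2.2
  have eQ : 2 ^ (n + 1) = 2 * 2 ^ n := by ring
  have e3 : 2 ^ (kOf w + 1 + j) = 2 * 2 ^ (kOf w + j) := by ring
  have e5 : 2 ^ (kOf w + 1 + j) ≤ 2 ^ (n + 1) := Nat.pow_le_pow_right (by norm_num) (by omega)
  have e6 : 2 ^ (kOf w + 1) ≤ 2 ^ (kOf w + j) := Nat.pow_le_pow_right (by norm_num) (by omega)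
  have e7 : 2 ^ (kOf w + j) ≤ 2 ^ n := Nat.pow_le_pow_right (by norm_num) (by omega)
  unfold Bstar
  rw [if_neg (by omega : ¬ j = 0), Nat.card_Icc]
  omega

end Claim3Arith
section Claim3Blocks

lemma c3_Bblk_subset {n s w : ℕ} (hs : 1 ≤ s) (i : ℕ) :
    Bblk n s w i ⊆ Finset.Icc 1 s := by
  intro x hx
  unfold Bblk at hx
  simp only [Finset.mem_Icc]
  by_cases h0 : i = 0
  · rw [if_pos h0] at hx
    simp only [Finset.mem_Icc] at hx
    omega
  · rw [if_neg h0] at hx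
    by_cases h1 : i = n - kOf w
    · rw [if_pos h1] at hx
      simp only [Finset.mem_Icc] at hx
      have hM : 0 < 2 ^ (kOf w + 1) * (n - kOf w) :=
        Nat.mul_pos (Nat.two_pow_pos _) (by omega)
      omega
    · rw [if_neg h1] at hx
      simp only [Finset.mem_Icc] at hx
      have hM : 0 < 2 ^ (kOf w + 1) * i := Nat.mul_pos (Nat.two_pow_pos _) (by omega)
      omega

lemma c3_Bblk_card {n s w i : ℕ} (hw : 1 ≤ w)
    (hbig : 2 ^ (kOf w + 1) * (n - kOf w) + 3 * w ≤ s)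
    (hi1 : 1 ≤ i) (hi2 : i ≤ n - kOf w) : 3 * w ≤ (Bblk n s w i).card := by
  have h3w : 3 * w ≤ 2 ^ (kOf w + 1) := (c3_kOf_spec hw).2.2
  unfold Bblk
  rw [if_neg (by omega : ¬ i = 0)]
  by_cases h1 : i = n - kOf w
  · rw [if_pos h1, Nat.card_Icc]
    subst h1
    omega
  · rw [if_neg h1, Nat.card_Icc]
    have hm1 : 2 ^ (kOf w + 1) * (i + 1) ≤ 2 ^ (kOf w + 1) * (n - kOf w) :=
      Nat.mul_le_mul_left _ (by omega)
    have hm2 : 2 ^ (kOf w + 1) * (i + 1) = 2 ^ (kOf w + 1) * i + 2 ^ (kOf w + 1) := by ring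
    omega

lemma c3_Bblk_upper {n s w j u : ℕ}
    (hbig : 2 ^ (kOf w + 1) * (n - kOf w) + 3 * w ≤ s)
    (hj1 : 1 ≤ j) (hj2 : j ≤ n - kOf w) (hu : u ∈ Bblk n s w j) :
    u + 2 ^ (kOf w + 1) * j ≤ s + 1 := by
  have hm : 2 ^ (kOf w + 1) * j ≤ 2 ^ (kOf w + 1) * (n - kOf w) :=
    Nat.mul_le_mul_left _ hj2
  unfold Bblk at hu
  rw [if_neg (by omega : ¬ j = 0)] at hu
  by_cases h1 : j = n - kOf w
  · rw [if_pos h1] at hu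
    simp only [Finset.mem_Icc] at hu
    subst h1; omega
  · rw [if_neg h1] at hu
    simp only [Finset.mem_Icc] at hu
    have hm2 : 2 ^ (kOf w + 1) * (j + 1) = 2 ^ (kOf w + 1) * j + 2 ^ (kOf w + 1) := by ring
    have hm1 : 2 ^ (kOf w + 1) * (j + 1) ≤ 2 ^ (kOf w + 1) * (n - kOf w) :=
      Nat.mul_le_mul_left _ (by omega)
    omega

lemma c3_Bblk_lower {n s w i u : ℕ}
    (hbig : 2 ^ (kOf w + 1) * (n - kOf w) + 3 * w ≤ s)
    (hi : i < n - kOf w) (hu : u ∈ Bblk n s w i) :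
    s + 2 ≤ u + 2 ^ (kOf w + 1) * (i + 1) := by
  have hm1 : 2 ^ (kOf w + 1) * (i + 1) ≤ 2 ^ (kOf w + 1) * (n - kOf w) :=
    Nat.mul_le_mul_left _ (by omega)
  unfold Bblk at hu
  by_cases h0 : i = 0
  · rw [if_pos h0] at hu
    simp only [Finset.mem_Icc] at hu
    subst h0
    have : 2 ^ (kOf w + 1) * (0 + 1) = 2 ^ (kOf w + 1) := by ring
    omega
  · rw [if_neg h0, if_neg (by omega : ¬ i = n - kOf w)] at hu
    simp only [Finset.mem_Icc] at hu
    omega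

lemma c3_Bblk_disj {n s w i j u : ℕ}
    (hbig : 2 ^ (kOf w + 1) * (n - kOf w) + 3 * w ≤ s)
    (hi : i ≤ n - kOf w) (hj : j ≤ n - kOf w)
    (hui : u ∈ Bblk n s w i) (huj : u ∈ Bblk n s w j) : i = j := by
  rcases lt_trichotomy i j with hlt | he | hlt
  · exfalso
    have h1 := c3_Bblk_lower hbig (by omega) hui
    have h2 := c3_Bblk_upper hbig (by omega) hj huj
    have h3 : 2 ^ (kOf w + 1) * (i + 1) ≤ 2 ^ (kOf w + 1) * j :=
      Nat.mul_le_mul_left _ (by omega)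
    omega
  · exact he
  · exfalso
    have h1 := c3_Bblk_lower hbig (by omega) huj
    have h2 := c3_Bblk_upper hbig (by omega) hi hui
    have h3 : 2 ^ (kOf w + 1) * (j + 1) ≤ 2 ^ (kOf w + 1) * i :=
      Nat.mul_le_mul_left _ (by omega)
    omega

lemma c3_Bblk_cover {n s w u : ℕ} (hw : 1 ≤ w) (hk : kOf w < n)
    (hbig : 2 ^ (kOf w + 1) * (n - kOf w) + 3 * w ≤ s)
    (hu1 : 1 ≤ u) (hu2 : u ≤ s) :
    ∃ i, i ≤ n - kOf w ∧ u ∈ Bblk n s w i := by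
  have hP1 : (1 : ℕ) ≤ 2 ^ (kOf w + 1) := Nat.one_le_two_pow
  by_cases hlast : u ≤ s - 2 ^ (kOf w + 1) * (n - kOf w) + 1
  · refine ⟨n - kOf w, le_rfl, ?_⟩
    unfold Bblk
    rw [if_neg (by omega : ¬ n - kOf w = 0), if_pos rfl]
    simp only [Finset.mem_Icc]
    exact ⟨hu1, hlast⟩
  · set d := s + 1 - u with hd
    set i := d / 2 ^ (kOf w + 1) with hi
    have hdm := Nat.div_add_mod d (2 ^ (kOf w + 1))
    have hml := Nat.mod_lt d (show 0 < 2 ^ (kOf w + 1) by omega)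
    have h1 : 2 ^ (kOf w + 1) * i ≤ d := by rw [hi]; omega
    have h2 : d < 2 ^ (kOf w + 1) * i + 2 ^ (kOf w + 1) := by rw [hi]; omega
    clear hdm hml
    have hiub : i < n - kOf w := by
      by_contra hcon
      push_neg at hcon
      have := Nat.mul_le_mul_left (2 ^ (kOf w + 1)) hcon
      omega
    by_cases hz : i = 0
    · refine ⟨0, by omega, ?_⟩
      unfold Bblk
      rw [if_pos rfl]
      simp only [Finset.mem_Icc]
      rw [hz] at h2
      omega
    · refine ⟨i, by omega, ?_⟩
      unfold Bblk
      rw [if_neg hz, if_neg (by omega : ¬ i = n - kOf w)]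
      simp only [Finset.mem_Icc]
      have hm2 : 2 ^ (kOf w + 1) * (i + 1) = 2 ^ (kOf w + 1) * i + 2 ^ (kOf w + 1) := by ring
      have hm1 : 2 ^ (kOf w + 1) * (i + 1) ≤ 2 ^ (kOf w + 1) * (n - kOf w) :=
        Nat.mul_le_mul_left _ (by omega)
      omega

lemma c3_tmap_mem {n s w u : ℕ} (hk : kOf w < n) (hs2 : s ≤ 2 ^ n)
    (hsP : 2 ^ (kOf w + 1) ≤ s) (hu : u ∈ Bblk n s w 0) :
    tmap n s u ∈ Bstar n w 0 := by
  have eQ : 2 ^ (n + 1) = 2 * 2 ^ n := by ring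
  have e1 : 2 ^ (kOf w + 1) ≤ 2 ^ n := Nat.pow_le_pow_right (by norm_num) (by omega)
  unfold Bblk at hu
  rw [if_pos rfl] at hu
  simp only [Finset.mem_Icc] at hu
  unfold Bstar tmap
  simp only [reduceIte, Finset.mem_Icc]
  omega

lemma c3_tinv {n s w z : ℕ} (hk : kOf w < n) (hs2 : s ≤ 2 ^ n)
    (hsP : 2 ^ (kOf w + 1) ≤ s) (hz : z ∈ Bstar n w 0) :
    z - (2 ^ (n + 1) - 1 - s) ∈ Bblk n s w 0 ∧ tmap n s (z - (2 ^ (n + 1) - 1 - s)) = z := by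
  have eQ : 2 ^ (n + 1) = 2 * 2 ^ n := by ring
  have e1 : 2 ^ (kOf w + 1) ≤ 2 ^ n := Nat.pow_le_pow_right (by norm_num) (by omega)
  unfold Bstar at hz
  simp only [reduceIte, Finset.mem_Icc] at hz
  unfold Bblk tmap
  rw [if_pos rfl]
  simp only [Finset.mem_Icc]
  omega

lemma c3_tmap_inj {n s u u' : ℕ} (h : tmap n s u = tmap n s u') : u = u' := by
  unfold tmap at h; omega

end Claim3Blocks
section Claim3Tree

lemma c3_children {F : CNFFam} {y : ℕ} (h1 : 1 ≤ y) (h2 : y ≤ 2 ^ (F.n + 1) - 1)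
    (hl : levelOf F.n y < F.n) :
    (1 ≤ (fullTree F).Lf y ∧ (fullTree F).Lf y ≤ 2 ^ (F.n + 1) - 1 ∧
      levelOf F.n ((fullTree F).Lf y) = levelOf F.n y + 1) ∧
    (1 ≤ (fullTree F).Rf y ∧ (fullTree F).Rf y ≤ 2 ^ (F.n + 1) - 1 ∧
      levelOf F.n ((fullTree F).Rf y) = levelOf F.n y + 1) := by
  have hspec := c3_level_spec h1 h2
  have hsub : 2 ^ (F.n + 1) - y + y = 2 ^ (F.n + 1) := Nat.sub_add_cancel (by omega)
  have e1 : 2 ^ (levelOf F.n y + 1) = 2 * 2 ^ levelOf F.n y := by ring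
  have e2 : 2 ^ (levelOf F.n y + 2) = 4 * 2 ^ levelOf F.n y := by ring
  have e3 : 2 ^ (levelOf F.n y + 2) ≤ 2 ^ (F.n + 1) :=
    Nat.pow_le_pow_right (by norm_num) (by omega)
  have hvdef : valOf F.n y = y - (2 ^ (F.n + 1) + 1 - 2 ^ (levelOf F.n y + 1)) := rfl
  have hLf : (fullTree F).Lf y =
      2 ^ (F.n + 1) + 1 + 2 * valOf F.n y - 2 ^ (levelOf F.n y + 2) := by
    show (if _ then _ else _) = _
    rw [if_pos ⟨h1, h2, hl⟩]
  have hRf : (fullTree F).Rf y =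
      2 ^ (F.n + 1) + 2 + 2 * valOf F.n y - 2 ^ (levelOf F.n y + 2) := by
    show (if _ then _ else _) = _
    rw [if_pos ⟨h1, h2, hl⟩]
  have hv1 : valOf F.n y + 1 ≤ 2 ^ levelOf F.n y := by omega
  refine ⟨⟨by omega, by omega, ?_⟩, ⟨by omega, by omega, ?_⟩⟩
  · rw [hLf]
    exact c3_level_eq (by omega) (by omega)
  · rw [hRf]
    exact c3_level_eq (by omega) (by omega)

lemma c3_leaf {F : CNFFam} {w : ℕ} {y : ℕ} (hk : kOf w < F.n)
    (hy : y ∈ Bstar F.n w (F.n - kOf w)) :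
    (fullTree F).Lf y = 0 ∧ (fullTree F).Rf y = 0 := by
  have hb := (c3_mem_BstarI hk (by omega) le_rfl).1 hy
  have hlev : ¬ levelOf F.n y < F.n := by omega
  constructor
  · show (if _ then _ else _) = _
    rw [if_neg (by tauto)]
  · show (if _ then _ else _) = _
    rw [if_neg (by tauto)]

lemma c3_child_cases {F : CNFFam} {w j y : ℕ} (hk : kOf w < F.n)
    (hj : j ≤ F.n - kOf w) (hy : y ∈ Bstar F.n w j) :
    ((fullTree F).Lf y = 0 ∧ (fullTree F).Rf y = 0) ∨
    (((fullTree F).Lf y ∈ Bstar F.n w 0 ∧ (fullTree F).Rf y ∈ Bstar F.n w 0) ∨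
      (∃ j', 1 ≤ j' ∧ j' ≤ F.n - kOf w ∧
        (fullTree F).Lf y ∈ Bstar F.n w j' ∧ (fullTree F).Rf y ∈ Bstar F.n w j')) := by
  by_cases hleaf : j = F.n - kOf w
  · subst hleaf
    exact Or.inl (c3_leaf hk hy)
  right
  by_cases h0 : j = 0
  · subst h0
    have hb := (c3_mem_Bstar0 hk).1 hy
    have hch := c3_children hb.1 hb.2.1 (by omega)
    by_cases hke : levelOf F.n y < kOf w
    · left
      exact ⟨(c3_mem_Bstar0 hk).2 ⟨hch.1.1, hch.1.2.1, by omega⟩,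
        (c3_mem_Bstar0 hk).2 ⟨hch.2.1, hch.2.2.1, by omega⟩⟩
    · right
      refine ⟨1, le_rfl, by omega, ?_, ?_⟩
      · exact (c3_mem_BstarI hk le_rfl (by omega)).2 ⟨hch.1.1, hch.1.2.1, by omega⟩
      · exact (c3_mem_BstarI hk le_rfl (by omega)).2 ⟨hch.2.1, hch.2.2.1, by omega⟩
  · have hb := (c3_mem_BstarI hk (by omega) hj).1 hy
    have hch := c3_children hb.1 hb.2.1 (by omega)
    right
    refine ⟨j + 1, by omega, by omega, ?_, ?_⟩
    · exact (c3_mem_BstarI hk (by omega) (by omega)).2 ⟨hch.1.1, hch.1.2.1, by omega⟩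
    · exact (c3_mem_BstarI hk (by omega) (by omega)).2 ⟨hch.2.1, hch.2.2.1, by omega⟩

end Claim3Tree

section Claim3Count

lemma c3_pdom_card {g : Finset (ℕ × ℕ)} (hpf : pfun g) : (pdom g).card = g.card := by
  unfold pdom
  apply Finset.card_image_of_injOn
  intro p hp q hq hpq
  exact Prod.ext hpq (hpf p hp q hq hpq)

lemma c3_count {n s w : ℕ} {h : Finset (ℕ × ℕ)} (hh : memH n s w h) {j : ℕ}
    (hj : j ∈ Finset.Icc 1 (n - kOf w)) :
    ((pdom h) ∩ Bblk n s w j).card ≤ ((pimg h) ∩ Bstar n w j).card := by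
  apply Finset.card_le_card_of_injOn (papp h)
  · intro a ha
    simp only [Finset.coe_inter, Set.mem_inter_iff, Finset.mem_coe, Finset.mem_inter] at ha ⊢
    have hm := c3_papp_mem ha.1
    exact ⟨c3_mem_pimg.2 ⟨a, hm⟩, hh.2.2.2.2.2 _ hm j hj ha.2⟩
  · intro a ha b hb hab
    simp only [Finset.coe_inter, Set.mem_inter_iff, Finset.mem_coe] at ha hb
    have hma := c3_papp_mem ha.1
    have hmb := c3_papp_mem hb.1
    exact hh.2.2.1 _ hma _ hmb (by simpa using hab)

lemma c3_zero_notmem_BstarI {n w j : ℕ} (hk : kOf w < n) (hj1 : 1 ≤ j)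
    (hj2 : j ≤ n - kOf w) : (0 : ℕ) ∉ Bstar n w j := by
  intro hc
  have := (c3_mem_BstarI hk hj1 hj2).1 hc
  omega

lemma c3_fresh_dom {n s w : ℕ} {h : Finset (ℕ × ℕ)} (hw : 1 ≤ w) (hk : kOf w < n)
    (hbig : 2 ^ (kOf w + 1) * (n - kOf w) + 3 * w ≤ s)
    (hh : memH n s w h) (hcard : (pimg h).card ≤ 3 * w) {j : ℕ}
    (hj1 : 1 ≤ j) (hj2 : j ≤ n - kOf w) :
    ∃ u', u' ∈ Bblk n s w j ∧ u' ∉ pdom h := by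
  have h1 := c3_count hh (Finset.mem_Icc.2 ⟨hj1, hj2⟩)
  have h2 : (pimg h ∩ Bstar n w j).card ≤ 3 * w - 1 := by
    have hsub : pimg h ∩ Bstar n w j ⊆ (pimg h).erase 0 := by
      intro x hx
      simp only [Finset.mem_inter] at hx
      exact Finset.mem_erase.2 ⟨fun hc => c3_zero_notmem_BstarI hk hj1 hj2 (hc ▸ hx.2), hx.1⟩
    have := Finset.card_le_card hsub
    rw [Finset.card_erase_of_mem (c3_zero_mem_pimg hh)] at this
    omega
  have h3 : 3 * w ≤ (Bblk n s w j).card := c3_Bblk_card hw hbig hj1 hj2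
  by_contra hC
  push_neg at hC
  have hsub2 : Bblk n s w j ⊆ pdom h ∩ Bblk n s w j :=
    fun x hx => Finset.mem_inter.2 ⟨hC x hx, hx⟩
  have := Finset.card_le_card hsub2
  omega

lemma c3_fresh_img {n s w : ℕ} {h : Finset (ℕ × ℕ)} (hw : 1 ≤ w) (hk : kOf w < n)
    (hh : memH n s w h) (hcard : (pimg h).card ≤ 3 * w) {j : ℕ}
    (hj1 : 1 ≤ j) (hj2 : j ≤ n - kOf w) :
    ∃ y, y ∈ Bstar n w j ∧ y ∉ pimg h := by
  have h3 : 3 * w ≤ (Bstar n w j).card := c3_Bstar_card hw hk hj1 hj2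
  by_contra hC
  push_neg at hC
  have hsub : insert 0 (Bstar n w j) ⊆ pimg h := by
    intro x hx
    rcases Finset.mem_insert.1 hx with rfl | hx
    · exact c3_zero_mem_pimg hh
    · exact hC x hx
  have hcard2 := Finset.card_le_card hsub
  rw [Finset.card_insert_of_notMem (c3_zero_notmem_BstarI hk hj1 hj2)] at hcard2
  omega

end Claim3Count
section Claim3Steps

lemma c3_addImage {F : CNFFam} {w s : ℕ} {h : Finset (ℕ × ℕ)}
    (hw : 1 ≤ w) (hk : kOf w < F.n) (hs : 1 ≤ s) (hs2 : s ≤ 2 ^ F.n)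
    (hsP : 2 ^ (kOf w + 1) ≤ s)
    (hbig : 2 ^ (kOf w + 1) * (F.n - kOf w) + 3 * w ≤ s)
    (hh : memH F.n s w h) (hcard : (pimg h).card ≤ 3 * w) {z : ℕ}
    (hz : z ∈ Bstar F.n w 0 ∨ ∃ j, 1 ≤ j ∧ j ≤ F.n - kOf w ∧ z ∈ Bstar F.n w j) :
    ∃ h', h ⊆ h' ∧ memH F.n s w h' ∧ pimg h' = insert z (pimg h) := by
  by_cases hzin : z ∈ pimg h
  · exact ⟨h, Finset.Subset.refl h, hh, (Finset.insert_eq_self.2 hzin).symm⟩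
  rcases hz with hz0 | ⟨j, hj1, hj2, hzj⟩
  · obtain ⟨hub, htz⟩ := c3_tinv hk hs2 hsP hz0
    have hud : z - (2 ^ (F.n + 1) - 1 - s) ∉ pdom h := by
      intro hc
      have hm := c3_papp_mem hc
      have h5 := hh.2.2.2.2.1 _ hm hub
      have h5' : papp h (z - (2 ^ (F.n + 1) - 1 - s)) = z := by
        rw [show ((z - (2 ^ (F.n + 1) - 1 - s), papp h (z - (2 ^ (F.n + 1) - 1 - s))).2 :
          ℕ) = papp h (z - (2 ^ (F.n + 1) - 1 - s)) from rfl] at h5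
        rw [h5]; exact htz
      rw [h5'] at hm
      exact hzin (c3_mem_pimg.2 ⟨_, hm⟩)
    have hbz := (c3_mem_Bstar0 hk).1 hz0
    refine ⟨insert (z - (2 ^ (F.n + 1) - 1 - s), z) h, Finset.subset_insert _ _, ?_,
      by rw [c3_pimg_insert]⟩
    refine c3_memH_insert hh hud hzin (c3_Bblk_subset hs _ hub)
      (Finset.mem_Icc.2 ⟨hbz.1, hbz.2.1⟩) (fun _ => htz.symm) ?_
    intro i hi hui
    have hii := Finset.mem_Icc.1 hi
    have := c3_Bblk_disj hbig (Nat.zero_le _) hii.2 hub hui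
    exact absurd this (by omega)
  · obtain ⟨u', hub, hud⟩ := c3_fresh_dom hw hk hbig hh hcard hj1 hj2
    have hbz := (c3_mem_BstarI hk hj1 hj2).1 hzj
    refine ⟨insert (u', z) h, Finset.subset_insert _ _, ?_, by rw [c3_pimg_insert]⟩
    refine c3_memH_insert hh hud hzin (c3_Bblk_subset hs _ hub)
      (Finset.mem_Icc.2 ⟨hbz.1, hbz.2.1⟩) ?_ ?_
    · intro h0mem
      have := c3_Bblk_disj hbig (Nat.zero_le _) hj2 h0mem hub
      exact absurd this (by omega)
    · intro i hi hui
      have hii := Finset.mem_Icc.1 hi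
      have hij := c3_Bblk_disj hbig hii.2 hj2 hui hub
      rw [hij]; exact hzj

lemma c3_stepB {F : CNFFam} {w s : ℕ} {h : Finset (ℕ × ℕ)}
    (hw : 1 ≤ w) (hk : kOf w < F.n) (hs : 1 ≤ s) (hs2 : s ≤ 2 ^ F.n)
    (hsP : 2 ^ (kOf w + 1) ≤ s)
    (hbig : 2 ^ (kOf w + 1) * (F.n - kOf w) + 3 * w ≤ s)
    (hh : memH F.n s w h) (hcard : (pimg h).card ≤ 3 * w) {u : ℕ}
    (hu : u ∈ Finset.Icc 1 s) :
    ∃ y h₁, h ⊆ h₁ ∧ memH F.n s w h₁ ∧ (u, y) ∈ h₁ ∧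
      pimg h₁ = insert y (pimg h) ∧ ∃ j, j ≤ F.n - kOf w ∧ y ∈ Bstar F.n w j := by
  have humem := Finset.mem_Icc.1 hu
  obtain ⟨i, hi2, hui⟩ := c3_Bblk_cover hw hk hbig humem.1 humem.2
  by_cases hud : u ∈ pdom h
  · refine ⟨papp h u, h, Finset.Subset.refl h, hh, c3_papp_mem hud,
      (Finset.insert_eq_self.2 (c3_mem_pimg.2 ⟨u, c3_papp_mem hud⟩)).symm, ?_⟩
    by_cases h0 : i = 0
    · subst h0
      have heq : papp h u = tmap F.n s u := hh.2.2.2.2.1 _ (c3_papp_mem hud) hui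
      refine ⟨0, Nat.zero_le _, ?_⟩
      rw [heq]
      exact c3_tmap_mem hk hs2 hsP hui
    · exact ⟨i, hi2, hh.2.2.2.2.2 _ (c3_papp_mem hud) i
        (Finset.mem_Icc.2 ⟨by omega, hi2⟩) hui⟩
  · by_cases h0 : i = 0
    · subst h0
      have hyB := c3_tmap_mem hk hs2 hsP hui
      have hbz := (c3_mem_Bstar0 hk).1 hyB
      have hyimg : tmap F.n s u ∉ pimg h := by
        intro hc
        obtain ⟨q, hq⟩ := c3_mem_pimg.1 hc
        have htyp := (hh.2.1 _ hq).1
        rcases Finset.mem_insert.1 htyp with hq0 | hqs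
        · have heq : tmap F.n s u = 0 := hh.1 _ hq _ hh.2.2.2.1 (by simpa using hq0)
          omega
        · obtain ⟨i', hi'2, hqi⟩ := c3_Bblk_cover hw hk hbig
            (Finset.mem_Icc.1 hqs).1 (Finset.mem_Icc.1 hqs).2
          by_cases h0' : i' = 0
          · subst h0'
            have heq : tmap F.n s u = tmap F.n s q := hh.2.2.2.2.1 _ hq hqi
            have hqe : u = q := c3_tmap_inj heq
            rw [← hqe] at hq
            exact hud (c3_mem_pdom.2 ⟨_, hq⟩)
          · have hB := hh.2.2.2.2.2 _ hq i' (Finset.mem_Icc.2 ⟨by omega, hi'2⟩) hqi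
            exact c3_Bstar_disj0 hk (by omega) hi'2 hyB hB
      refine ⟨tmap F.n s u, insert (u, tmap F.n s u) h, Finset.subset_insert _ _,
        c3_memH_insert hh hud hyimg hu (Finset.mem_Icc.2 ⟨hbz.1, hbz.2.1⟩)
          (fun _ => rfl) ?_,
        Finset.mem_insert_self _ _, by rw [c3_pimg_insert], 0, Nat.zero_le _, hyB⟩
      intro i hi huiB
      have hii := Finset.mem_Icc.1 hi
      have := c3_Bblk_disj hbig (Nat.zero_le _) hii.2 hui huiB
      exact absurd this (by omega)
    · obtain ⟨y, hyB, hyimg⟩ := c3_fresh_img hw hk hh hcard (show 1 ≤ i by omega) hi2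
      have hbz := (c3_mem_BstarI hk (by omega) hi2).1 hyB
      refine ⟨y, insert (u, y) h, Finset.subset_insert _ _,
        c3_memH_insert hh hud hyimg hu (Finset.mem_Icc.2 ⟨hbz.1, hbz.2.1⟩) ?_ ?_,
        Finset.mem_insert_self _ _, by rw [c3_pimg_insert], i, hi2, hyB⟩
      · intro hB0
        have := c3_Bblk_disj hbig (Nat.zero_le _) hi2 hB0 hui
        exact absurd this (by omega)
      · intro i' hi' hui'
        have hii := Finset.mem_Icc.1 hi'
        have heq := c3_Bblk_disj hbig hii.2 hi2 hui' hui
        rw [heq]; exact hyB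

end Claim3Steps

/-! ## Statement 11 -/

/-- Claim 3: for an unsatisfiable CNF `F` with `n` variables and integers `w, s ≥ 1` with
`2^n ≥ s ≥ 6nw`: if `p = (g,h)` is a condition with `|Dom(g)| ≤ w` and `u ∈ [s]`, then
there is a condition `p' = (g',h')` extending `p` (i.e. `h ⊆ h'`) with
`Dom(g') = Dom(g) ∪ {u}`. -/
theorem condition_extension (F : CNFFam) (hWF : F.WF) (hunsat : ¬F.Sat) (w s : ℕ)
    (hn : 1 ≤ F.n) (hw : 1 ≤ w) (hs : 1 ≤ s)
    (hlow : 6 * F.n * w ≤ s) (hhigh : s ≤ 2 ^ F.n)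
    (g h : Finset (ℕ × ℕ)) (hcond : IsCond F s w g h)
    (hcard : (pdom g).card ≤ w) (u : ℕ) (hu : u ∈ Finset.Icc 1 s) :
    ∃ g' h' : Finset (ℕ × ℕ), IsCond F s w g' h' ∧ h ⊆ h' ∧
      pdom g' = insert u (pdom g) := by
  obtain ⟨hg, hh, hgh, himg⟩ := hcond
  by_cases hug : u ∈ pdom g
  · exact ⟨g, h, ⟨hg, hh, hgh, himg⟩, Finset.Subset.refl h,
      (Finset.insert_eq_self.2 hug).symm⟩
  obtain ⟨hk1, hk2, hk3⟩ := c3_kOf_spec hw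
  have e2k : 2 ^ (kOf w + 1) = 2 * 2 ^ kOf w := by ring
  have hsP : 2 ^ (kOf w + 1) ≤ s := by
    have h6 : 6 * 1 * w ≤ 6 * F.n * w := Nat.mul_le_mul_right w (by omega)
    omega
  have hkn : kOf w < F.n := by
    have hone : (1 : ℕ) ≤ 2 ^ F.n := Nat.one_le_two_pow
    have hlt : 2 ^ (kOf w + 1) < 2 ^ (F.n + 1) := by
      have e2n : 2 ^ (F.n + 1) = 2 * 2 ^ F.n := by ring
      omega
    have := (Nat.pow_lt_pow_iff_right (by norm_num : 1 < 2)).1 hlt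
    omega
  have hbig := c3_big hn hlow hk1 hk2
  have hg0 : (0, 0) ∈ g := hg.2.2.2.1
  have hpimg_g_card : (pimg g).card ≤ w := by
    have h1 : (pimg g).card ≤ g.card := Finset.card_image_le
    rw [← c3_pdom_card hg.1] at h1
    omega
  have h0g : (0 : ℕ) ∈ pimg g := c3_zero_mem_pimg hg
  have hbnd_card : (bnd F (pimg g)).card ≤ 2 * (w - 1) := by
    unfold bnd
    have hc1 := Finset.card_image_le (s := (pimg g).erase 0) (f := (fullTree F).Lf)
    have hc2 := Finset.card_image_le (s := (pimg g).erase 0) (f := (fullTree F).Rf)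
    have hc3 := Finset.card_union_le (((pimg g).erase 0).image (fullTree F).Lf)
      (((pimg g).erase 0).image (fullTree F).Rf)
    have hc4 : ((pimg g).erase 0).card = (pimg g).card - 1 :=
      Finset.card_erase_of_mem h0g
    omega
  have hcard0 : (pimg h).card + 2 ≤ 3 * w := by
    rw [himg]
    have := Finset.card_union_le (pimg g) (bnd F (pimg g))
    omega
  obtain ⟨y, h₁, hsub1, hh₁, huy, hp1, j, hj2, hyB⟩ :=
    c3_stepB hw hkn hs hhigh hsP hbig hh (by omega) hu
  have hp1card : (pimg h₁).card ≤ 3 * w - 1 := by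
    rw [hp1]
    have := Finset.card_insert_le y (pimg h)
    omega
  have hy1 := c3_Bstar_pos hkn hj2 hyB
  have hstep : ∃ h', h₁ ⊆ h' ∧ memH F.n s w h' ∧
      pimg h' = insert ((fullTree F).Rf y) (insert ((fullTree F).Lf y) (pimg h₁)) := by
    rcases c3_child_cases hkn hj2 hyB with ⟨hL0, hR0⟩ | hcase
    · refine ⟨h₁, Finset.Subset.refl _, hh₁, ?_⟩
      rw [hL0, hR0]
      have h00 : (0 : ℕ) ∈ pimg h₁ := c3_zero_mem_pimg hh₁
      rw [Finset.insert_eq_self.2 h00, Finset.insert_eq_self.2 h00]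
    · have hzargL : (fullTree F).Lf y ∈ Bstar F.n w 0 ∨
          ∃ j', 1 ≤ j' ∧ j' ≤ F.n - kOf w ∧ (fullTree F).Lf y ∈ Bstar F.n w j' := by
        rcases hcase with ⟨hL, _⟩ | ⟨j', hj'1, hj'2, hL, _⟩
        · exact Or.inl hL
        · exact Or.inr ⟨j', hj'1, hj'2, hL⟩
      have hzargR : (fullTree F).Rf y ∈ Bstar F.n w 0 ∨
          ∃ j', 1 ≤ j' ∧ j' ≤ F.n - kOf w ∧ (fullTree F).Rf y ∈ Bstar F.n w j' := by
        rcases hcase with ⟨_, hR⟩ | ⟨j', hj'1, hj'2, _, hR⟩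
        · exact Or.inl hR
        · exact Or.inr ⟨j', hj'1, hj'2, hR⟩
      obtain ⟨h₂, hsub2, hh₂, hp2⟩ :=
        c3_addImage hw hkn hs hhigh hsP hbig hh₁ (by omega) hzargL
      have hp2card : (pimg h₂).card ≤ 3 * w := by
        rw [hp2]
        have := Finset.card_insert_le ((fullTree F).Lf y) (pimg h₁)
        omega
      obtain ⟨h₃, hsub3, hh₃, hp3⟩ :=
        c3_addImage hw hkn hs hhigh hsP hbig hh₂ hp2card hzargR
      exact ⟨h₃, hsub2.trans hsub3, hh₃, by rw [hp3, hp2]⟩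
  obtain ⟨h', hsub2, hh', hp'⟩ := hstep
  have hy0 : y ≠ 0 := by omega
  have huyh' : (u, y) ∈ h' := hsub2 huy
  have hgsub : insert (u, y) g ⊆ h' := by
    intro p hp
    rcases Finset.mem_insert.1 hp with rfl | hp
    · exact huyh'
    · exact hsub2 (hsub1 (hgh hp))
  refine ⟨insert (u, y) g, h', ⟨?_, hh', hgsub, ?_⟩,
    fun p hp => hsub2 (hsub1 hp), by simp [pdom]⟩
  · exact c3_memH_subset hgsub hh' (Finset.mem_insert_of_mem hg0)
  · have hpg' : pimg (insert (u, y) g) = insert y (pimg g) := by simp [pimg]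
    rw [hp', hp1, hpg']
    have hbnd2 : bnd F (insert y (pimg g)) =
        insert ((fullTree F).Lf y) (((pimg g).erase 0).image (fullTree F).Lf) ∪
        insert ((fullTree F).Rf y) (((pimg g).erase 0).image (fullTree F).Rf) := by
      unfold bnd
      rw [Finset.erase_insert_of_ne hy0, Finset.image_insert, Finset.image_insert]
    rw [hbnd2, himg]
    unfold bnd
    ext x
    simp only [Finset.mem_insert, Finset.mem_union]
    tauto
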